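/- arXiv:2411.05458 — 2 statements merged into one kernel-verified Lean document; each statement's English description precedes it below -/
import Mathlib

section
/- If α = p₁p₂⋯pₙ is a semi-meander with p₁ = n, then the rotation p₂p₃⋯pₙp₁ is also a semi-meander. -/
/-- 1-based position of symbol `e` in the string `p`. -/
def posOf (p : List ℕ) (e : ℕ) : ℕ := p.idxOf e + 1

/-- `x` lies strictly between `a` and `b`. -/
def StrictlyBetween (a b x : ℕ) : Prop := min a b < x ∧ x < max a b

/-- Two same-side arcs with endpoint pairs `{a,b}` and `{c,d}` cross
if exactly one of `c`, `d` lies strictly between `a` and `b`. -/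
def ArcsCross (a b c d : ℕ) : Prop :=
  Xor' (StrictlyBetween a b c) (StrictlyBetween a b d)

/-- A stamp folding of order `n`: a permutation of `1,…,n` (as a list, `p i` is
the stamp at position `i`) such that no two bottom arcs (joining the positions
of stamps `i` and `i+1` for odd `i`) cross, and no two top arcs (even `i`) cross. -/
def IsStampFolding (n : ℕ) (p : List ℕ) : Prop :=
  p.Perm (List.range' 1 n) ∧
  ∀ i j : ℕ, 1 ≤ i → i < j → j + 1 ≤ n → i % 2 = j % 2 →
    ¬ ArcsCross (posOf p i) (posOf p (i + 1)) (posOf p j) (posOf p (j + 1))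

/-- A semi-meander of order `n`: a stamp folding in which stamp `n` is visible
from above when `n` is even and from below when `n` is odd, i.e. no arc on the
relevant side strictly covers the position of stamp `n`. -/
def IsSemiMeander (n : ℕ) (p : List ℕ) : Prop :=
  IsStampFolding n p ∧
  ∀ i : ℕ, 1 ≤ i → i + 1 ≤ n → i % 2 = n % 2 →
    ¬ StrictlyBetween (posOf p i) (posOf p (i + 1)) (posOf p n)

/-!
Moving stamp `n` from the first to the last position shifts every other stamp one place
to the left, which preserves all crossings among arcs not touching `n`. The arc from
`n - 1` (at position `p`) to `n` used to cover the positions `2, …, p - 1` and now covers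
`p + 1, …, n - 1`; either way another arc crosses it exactly when that arc has one
endpoint on each side of `p`. Once `n` is last, no arc can cover it, so the rotation is a
semi-meander.
-/

section Positions

variable {l : List ℕ} {a e : ℕ}

theorem posOf_cons_self : posOf (a :: l) a = 1 := by
  simp [posOf]

theorem posOf_cons_of_ne (h : e ≠ a) : posOf (a :: l) e = posOf l e + 1 := by
  simp [posOf, List.idxOf_cons_ne l (Ne.symm h)]

theorem posOf_append_of_mem (l' : List ℕ) (h : e ∈ l) : posOf (l ++ l') e = posOf l e := by
  simp [posOf, List.idxOf_append_of_mem h]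

theorem posOf_le_length (h : e ∈ l) : posOf l e ≤ l.length :=
  List.idxOf_lt_length_iff.mpr h

end Positions

theorem arcsCross_iff {a b c d : ℕ} : ArcsCross a b c d ↔
    StrictlyBetween a b c ∧ ¬ StrictlyBetween a b d ∨
      StrictlyBetween a b d ∧ ¬ StrictlyBetween a b c :=
  Iff.rfl

theorem arcsCross_succ_iff {a b c d : ℕ} :
    ArcsCross (a + 1) (b + 1) (c + 1) (d + 1) ↔ ArcsCross a b c d := by
  simp only [arcsCross_iff, StrictlyBetween]
  omega

theorem arcsCross_succ_one_iff {a b c N : ℕ} (ha : a < N) (hb : b < N) :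
    ArcsCross (a + 1) (b + 1) (c + 1) 1 ↔ ArcsCross a b c N := by
  simp only [arcsCross_iff, StrictlyBetween]
  omega

theorem not_strictlyBetween_of_le {a b N : ℕ} (ha : a ≤ N) (hb : b ≤ N) :
    ¬ StrictlyBetween a b N := by
  simp only [StrictlyBetween]
  omega

section Permutation

variable {l q : List ℕ} {n e : ℕ}

theorem mem_of_perm_range' (hl : l.Perm (List.range' 1 n)) (h₁ : 1 ≤ e) (h₂ : e ≤ n) :
    e ∈ l :=
  hl.mem_iff.mpr (List.mem_range'_1.mpr ⟨h₁, by omega⟩)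

theorem length_of_perm_range' (hl : l.Perm (List.range' 1 n)) : l.length = n := by
  simpa using hl.length_eq

theorem posOf_append_singleton_of_perm (hq : (n :: q).Perm (List.range' 1 n)) :
    posOf (q ++ [n]) n = n := by
  have hn : n ∉ q := (List.nodup_cons.mp (hq.nodup_iff.mpr List.nodup_range')).1
  have hlen := length_of_perm_range' hq
  simp only [posOf, List.idxOf_append_of_notMem hn, List.idxOf_cons_self]
  simpa using hlen

end Permutation

theorem IsStampFolding.isSemiMeander_of_posOf_self {n : ℕ} {p : List ℕ}
    (h : IsStampFolding n p) (hp : posOf p n = n) : IsSemiMeander n p := by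
  refine ⟨h, fun i hi hin _ => ?_⟩
  have hlen := length_of_perm_range' h.1
  rw [hp]
  exact not_strictlyBetween_of_le
    (hlen ▸ posOf_le_length (mem_of_perm_range' h.1 hi (by omega)))
    (hlen ▸ posOf_le_length (mem_of_perm_range' h.1 (by omega) hin))

theorem IsStampFolding.rotate_head {n : ℕ} {q : List ℕ} (h : IsStampFolding n (n :: q)) :
    IsStampFolding n (q ++ [n]) := by
  obtain ⟨hperm, hcross⟩ := h
  have hlen : q.length + 1 = n := by simpa using length_of_perm_range' hperm
  have hmem : ∀ e, 1 ≤ e → e < n → e ∈ q := fun e h₁ h₂ =>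
    (List.mem_cons.mp (mem_of_perm_range' hperm h₁ h₂.le)).resolve_left (by omega)
  have hshift : ∀ e, 1 ≤ e → e < n → posOf (n :: q) e = posOf (q ++ [n]) e + 1 :=
    fun e h₁ h₂ => by rw [posOf_cons_of_ne (by omega), posOf_append_of_mem _ (hmem e h₁ h₂)]
  have hlt : ∀ e, 1 ≤ e → e < n → posOf (q ++ [n]) e < n := fun e h₁ h₂ => by
    have := posOf_le_length (hmem e h₁ h₂)
    rw [posOf_append_of_mem _ (hmem e h₁ h₂)]
    omega
  refine ⟨(List.perm_append_singleton n q).trans hperm, fun i j hi hij hjn hpar => ?_⟩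
  have H := hcross i j hi hij hjn hpar
  rw [hshift i hi (by omega), hshift (i + 1) (by omega) (by omega),
    hshift j (by omega) (by omega)] at H
  rcases hjn.eq_or_lt with hj | hj
  · rw [hj, posOf_cons_self, arcsCross_succ_one_iff (hlt i hi (by omega))
      (hlt (i + 1) (by omega) (by omega))] at H
    rwa [hj, posOf_append_singleton_of_perm hperm]
  · rwa [hshift (j + 1) (by omega) hj, arcsCross_succ_iff] at H

/-- If `n · q` is a semi-meander of order `n`, then its rotation `q · n` is also a
semi-meander of order `n`. -/
theorem semi_meander_rotate_of_head (n : ℕ) (q : List ℕ)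
    (h : IsSemiMeander n (n :: q)) : IsSemiMeander n (q ++ [n]) :=
  h.1.rotate_head.isSemiMeander_of_posOf_self (posOf_append_singleton_of_perm h.1.1)
end

section
/- Let α = p₁p₂⋯pₙ be a semi-meander with pₙ ≠ n. Let j* be the least j ≥ 1 such that the left rotation moving the suffix of length j to the front, i.e., pₙ₋ⱼ₊₁⋯pₙp₁⋯pₙ₋ⱼ, is a semi-meander. Then: j* = 1 if pₙ = 1 and n is even; j* = n − I(pₙ+1, α) + 1 if pₙ and n have the same parity; and j* = n − I(pₙ−1, α) + 1 if pₙ and n have different parities, where I(e, α) is the position of symbol e in α. -/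
/-!
Rotating a folding so that it is cut between positions `m` and `m + 1` shifts positions
cyclically; an arc's relation to a third position flips exactly when the arc spans the
cut. So every rotation of a stamp folding is a stamp folding, and a rotation of a semi-meander is
a semi-meander iff no arc on the side of stamp `n` spans the cut. The last stamp `pₙ` sits at
position `n`, and (apart from the case `pₙ = 1`, `n` even) it is an endpoint of an arc on that side,
namely `{pₙ, pₙ + 1}` or `{pₙ - 1, pₙ}`; if its other endpoint is at position `q`, the cuts
`q, …, n - 1` are spanned by it, while the cut `q - 1` is spanned by no such arc, since such an arc
would cross it.
-/

/-- The arc joining positions `a` and `b` spans the gap between positions `m` and `m + 1`. -/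
def SpansGap (a b m : ℕ) : Prop := min a b ≤ m ∧ m < max a b

/-- The 1-based position `q` in a list of length `n` becomes `rotatePos n m q` in its rotation
by `m < n`. -/
def rotatePos (n m q : ℕ) : ℕ := if m < q then q - m else q + (n - m)

section Positions

variable {p : List ℕ} {e f : ℕ}

theorem one_le_posOf : 1 ≤ posOf p e := Nat.succ_pos _

theorem posOf_le_length_s9 (he : e ∈ p) : posOf p e ≤ p.length :=
  List.idxOf_lt_length_iff.2 he

theorem posOf_inj (he : e ∈ p) : posOf p e = posOf p f ↔ e = f := by
  rw [posOf, posOf, Nat.add_right_cancel_iff, List.idxOf_inj he]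

theorem posOf_eq_length_of_getLast?_eq_some (hnd : p.Nodup) (hlast : p.getLast? = some e) :
    posOf p e = p.length := by
  obtain ⟨l, rfl⟩ := List.getLast?_eq_some_iff.1 hlast
  have hel : e ∉ l := ((List.nodup_concat l e).1 (by simpa using hnd)).1
  simp [posOf, List.idxOf_append_of_notMem hel]

theorem posOf_rotate (hnd : p.Nodup) (he : e ∈ p) {m : ℕ} (hm : m < p.length) :
    posOf (p.rotate m) e = rotatePos p.length m (posOf p e) := by
  have hi : p.idxOf e < p.length := List.idxOf_lt_length_iff.2 he
  set k := rotatePos p.length m (posOf p e) - 1 with hk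
  have hk_lt : k < (p.rotate m).length := by
    rw [List.length_rotate, hk, rotatePos, posOf]; split_ifs <;> omega
  have hget : (p.rotate m)[k] = e := by
    have hidx : (k + m) % p.length = p.idxOf e := by
      rw [hk, rotatePos, posOf]
      split_ifs
      · rw [Nat.mod_eq_of_lt (by omega)]; omega
      · rw [show p.idxOf e + 1 + (p.length - m) - 1 + m = p.idxOf e + p.length by omega,
          Nat.add_mod_right, Nat.mod_eq_of_lt hi]
    simp only [List.getElem_rotate, hidx, List.getElem_idxOf]
  have hpos := (List.nodup_rotate.2 hnd).idxOf_getElem k hk_lt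
  rw [hget] at hpos
  have : 1 ≤ rotatePos p.length m (posOf p e) := by rw [rotatePos, posOf]; split_ifs <;> omega
  rw [posOf, hpos]; omega

end Positions

section Rotation

variable {p : List ℕ} {m : ℕ}

theorem strictlyBetween_posOf_rotate_iff (hnd : p.Nodup) (hm : m < p.length) {a b x : ℕ}
    (ha : a ∈ p) (hb : b ∈ p) (hx : x ∈ p) (hax : a ≠ x) (hbx : b ≠ x) :
    StrictlyBetween (posOf (p.rotate m) a) (posOf (p.rotate m) b) (posOf (p.rotate m) x) ↔
      Xor (StrictlyBetween (posOf p a) (posOf p b) (posOf p x))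
        (SpansGap (posOf p a) (posOf p b) m) := by
  have hAX := (posOf_inj ha).not.2 hax
  have hBX := (posOf_inj hb).not.2 hbx
  have hA := posOf_le_length_s9 ha
  have hB := posOf_le_length_s9 hb
  have hX := posOf_le_length_s9 hx
  have hA1 : 1 ≤ posOf p a := one_le_posOf
  have hB1 : 1 ≤ posOf p b := one_le_posOf
  have hX1 : 1 ≤ posOf p x := one_le_posOf
  rw [posOf_rotate hnd ha hm, posOf_rotate hnd hb hm, posOf_rotate hnd hx hm]
  unfold StrictlyBetween SpansGap rotatePos Xor
  split_ifs <;> omega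

theorem arcsCross_posOf_rotate_iff (hnd : p.Nodup) (hm : m < p.length) {a b c d : ℕ}
    (ha : a ∈ p) (hb : b ∈ p) (hc : c ∈ p) (hd : d ∈ p)
    (hac : a ≠ c) (had : a ≠ d) (hbc : b ≠ c) (hbd : b ≠ d) :
    ArcsCross (posOf (p.rotate m) a) (posOf (p.rotate m) b)
        (posOf (p.rotate m) c) (posOf (p.rotate m) d) ↔
      ArcsCross (posOf p a) (posOf p b) (posOf p c) (posOf p d) := by
  change Xor _ _ ↔ Xor _ _
  rw [strictlyBetween_posOf_rotate_iff hnd hm ha hb hc hac hbc,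
    strictlyBetween_posOf_rotate_iff hnd hm ha hb hd had hbd]
  unfold Xor
  tauto

end Rotation

theorem arcsCross_comm {a b c d : ℕ} (hac : a ≠ c) (had : a ≠ d) (hbc : b ≠ c) (hbd : b ≠ d) :
    ArcsCross a b c d ↔ ArcsCross c d a b := by
  change Xor _ _ ↔ Xor _ _
  unfold StrictlyBetween Xor
  omega

namespace IsStampFolding

variable {n : ℕ} {p : List ℕ} {e f : ℕ}

theorem length_eq (h : IsStampFolding n p) : p.length = n := by
  rw [h.1.length_eq, List.length_range']

theorem nodup (h : IsStampFolding n p) : p.Nodup :=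
  h.1.nodup_iff.2 List.nodup_range'

theorem mem_iff (h : IsStampFolding n p) : e ∈ p ↔ 1 ≤ e ∧ e ≤ n := by
  rw [h.1.mem_iff, List.mem_range'_1]; omega

theorem posOf_le (h : IsStampFolding n p) (he : 1 ≤ e) (hen : e ≤ n) : posOf p e ≤ n :=
  h.length_eq ▸ posOf_le_length_s9 (h.mem_iff.2 ⟨he, hen⟩)

theorem posOf_ne (h : IsStampFolding n p) (he : 1 ≤ e) (hen : e ≤ n) (hef : e ≠ f) :
    posOf p e ≠ posOf p f :=
  (posOf_inj (h.mem_iff.2 ⟨he, hen⟩)).not.2 hef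

theorem not_arcsCross {i j : ℕ} (h : IsStampFolding n p) (hi : 1 ≤ i) (hj : 1 ≤ j)
    (hin : i + 1 ≤ n) (hjn : j + 1 ≤ n) (hij : i ≠ j) (hpar : i % 2 = j % 2) :
    ¬ ArcsCross (posOf p i) (posOf p (i + 1)) (posOf p j) (posOf p (j + 1)) := by
  rcases hij.lt_or_gt with hlt | hgt
  · exact h.2 i j hi hlt hjn hpar
  · rw [arcsCross_comm (h.posOf_ne hi (by omega) (by omega))
      (h.posOf_ne hi (by omega) (by omega))
      (h.posOf_ne (by omega) hin (by omega))
      (h.posOf_ne (by omega) hin (by omega))]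
    exact h.2 j i hj hgt hin hpar.symm

theorem rotate (h : IsStampFolding n p) (m : ℕ) : IsStampFolding n (p.rotate m) := by
  rcases n.eq_zero_or_pos with rfl | hn
  · obtain rfl : p = [] := List.length_eq_zero_iff.1 h.length_eq
    rwa [List.rotate_nil]
  have hm : m % n < p.length := by rw [h.length_eq]; exact Nat.mod_lt m hn
  rw [← List.rotate_mod, h.length_eq]
  refine ⟨(p.rotate_perm _).trans h.1, fun i j hi hij hjn hpar => ?_⟩
  rw [arcsCross_posOf_rotate_iff h.nodup hm (h.mem_iff.2 ⟨hi, by omega⟩)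
    (h.mem_iff.2 ⟨by omega, by omega⟩) (h.mem_iff.2 ⟨by omega, by omega⟩)
    (h.mem_iff.2 ⟨by omega, hjn⟩) (by omega) (by omega) (by omega) (by omega)]
  exact h.2 i j hi hij hjn hpar

end IsStampFolding

namespace IsSemiMeander

variable {n : ℕ} {p : List ℕ}

theorem rotate_iff (h : IsSemiMeander n p) {m : ℕ} (hm : m < n) :
    IsSemiMeander n (p.rotate m) ↔ ∀ i, 1 ≤ i → i + 1 ≤ n → i % 2 = n % 2 →
      ¬ SpansGap (posOf p i) (posOf p (i + 1)) m := by
  obtain ⟨hfold, hvis⟩ := h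
  rw [IsSemiMeander, and_iff_right (hfold.rotate m)]
  refine forall₄_congr fun i hi hin hpar => ?_
  rw [strictlyBetween_posOf_rotate_iff hfold.nodup (hfold.length_eq ▸ hm)
    (hfold.mem_iff.2 ⟨hi, by omega⟩) (hfold.mem_iff.2 ⟨by omega, hin⟩)
    (hfold.mem_iff.2 ⟨by omega, le_rfl⟩) (by omega) (by omega)]
  have := hvis i hi hin hpar
  unfold Xor
  tauto

theorem isLeast_rotate_of_arc (h : IsSemiMeander n p) {y q : ℕ} (hy : 1 ≤ y) (hyn : y + 1 ≤ n)
    (hpar : y % 2 = n % 2) (hmin : min (posOf p y) (posOf p (y + 1)) = q)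
    (hmax : max (posOf p y) (posOf p (y + 1)) = n) :
    IsLeast {j | 1 ≤ j ∧ IsSemiMeander n (p.rotate (n - j))} (n - q + 1) := by
  have hq : 1 ≤ q := hmin ▸ le_min one_le_posOf one_le_posOf
  have hqn : q < n := by
    have := h.1.posOf_ne hy (by omega) (by omega : y ≠ y + 1)
    omega
  refine ⟨⟨by omega, (h.rotate_iff (by omega)).2 fun i hi hin hipar hspan => ?_⟩, ?_⟩
  · rw [show n - (n - q + 1) = q - 1 by omega] at hspan
    by_cases hiy : i = y
    · subst hiy
      unfold SpansGap at hspan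
      omega
    -- the arc `{i, i + 1}` joins a position before `q` to one strictly between `q` and `n`
    have := h.1.posOf_le hi (by omega)
    have := h.1.posOf_le (by omega) hin
    have := h.1.posOf_ne hi (by omega) hiy
    have := h.1.posOf_ne hi (by omega) (by omega : i ≠ y + 1)
    have := h.1.posOf_ne (by omega) hin (by omega : i + 1 ≠ y)
    have := h.1.posOf_ne (by omega) hin (by omega : i + 1 ≠ y + 1)
    refine h.1.not_arcsCross hi hy hin hyn hiy (by omega) ?_
    change Xor _ _
    unfold SpansGap at hspan
    unfold StrictlyBetween Xor
    omega
  · rintro j ⟨hj, hrot⟩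
    by_contra! hlt
    exact (h.rotate_iff (by omega)).1 hrot y hy hyn hpar (by unfold SpansGap; omega)

theorem isLeast_rotate_of_posOf_one (h : IsSemiMeander n p) (hpos : posOf p 1 = n)
    (heven : n % 2 = 0) : IsLeast {j | 1 ≤ j ∧ IsSemiMeander n (p.rotate (n - j))} 1 := by
  have hn : 1 ≤ n := hpos ▸ one_le_posOf
  refine ⟨⟨le_rfl, (h.rotate_iff (by omega)).2 fun i hi hin hipar hspan => ?_⟩, fun j hj => hj.1⟩
  have := h.1.posOf_le hi (by omega)
  have := h.1.posOf_le (by omega) hin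
  have := h.1.posOf_ne hi (by omega) (by omega : i ≠ 1)
  have := h.1.posOf_ne (by omega) hin (by omega : i + 1 ≠ 1)
  unfold SpansGap at hspan
  omega

end IsSemiMeander

/-- Lemma on left rotations: let `α = p₁⋯pₙ` be a semi-meander with `pₙ ≠ n` and let
`j*` be the least `j ≥ 1` such that the left rotation moving the suffix of length `j`
to the front, i.e. `pₙ₋ⱼ₊₁⋯pₙp₁⋯pₙ₋ⱼ`, is a semi-meander. Then `j* = 1` if `pₙ = 1`
and `n` is even; otherwise `j* = n - I(pₙ+1, α) + 1` if `pₙ` and `n` have the same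
parity, and `j* = n - I(pₙ-1, α) + 1` if they have different parities. -/
theorem semi_meander_next_left_rotation (n : ℕ) (p : List ℕ) (h : IsSemiMeander n p)
    (pn : ℕ) (hlast : p.getLast? = some pn) (hne : pn ≠ n) (jstar : ℕ)
    (hleast : IsLeast {j : ℕ | 1 ≤ j ∧ IsSemiMeander n (p.rotate (n - j))} jstar) :
    (pn = 1 ∧ Even n → jstar = 1) ∧
    (¬ (pn = 1 ∧ Even n) →
      (pn % 2 = n % 2 → jstar = n - posOf p (pn + 1) + 1) ∧
      (pn % 2 ≠ n % 2 → jstar = n - posOf p (pn - 1) + 1)) := by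
  have hfold := h.1
  have hposn : posOf p pn = n :=
    hfold.length_eq ▸ posOf_eq_length_of_getLast?_eq_some hfold.nodup hlast
  obtain ⟨hpn, hpnn⟩ := hfold.mem_iff.1 (List.mem_of_getLast? hlast)
  refine ⟨fun ⟨hpn1, heven⟩ => ?_, fun hspecial => ⟨fun hpar => ?_, fun hpar => ?_⟩⟩
  · subst hpn1
    exact hleast.unique (h.isLeast_rotate_of_posOf_one hposn (Nat.even_iff.1 heven))
  · have := hfold.posOf_le (e := pn + 1) (by omega) (by omega)
    have := hfold.posOf_ne hpn hpnn (by omega : pn ≠ pn + 1)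
    exact hleast.unique (h.isLeast_rotate_of_arc hpn (by omega) hpar (by omega) (by omega))
  · have hpn2 : 2 ≤ pn := by
      by_contra!
      exact hspecial ⟨by omega, Nat.even_iff.2 (by omega)⟩
    have := hfold.posOf_le (e := pn - 1) (by omega) (by omega)
    have := hfold.posOf_ne hpn hpnn (by omega : pn ≠ pn - 1)
    have harc := h.isLeast_rotate_of_arc (y := pn - 1) (q := posOf p (pn - 1))
      (by omega) (by omega) (by omega)
    rw [Nat.sub_add_cancel hpn] at harc
    exact hleast.unique (harc (by omega) (by omega))
end
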